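/- arXiv:2603.00758 — 6 statements merged into one kernel-verified Lean document; each statement's English description precedes it below -/
import Mathlib

section
/- Let (M, ω) be a connected symplectic manifold of dimension 2d with d ≥ 2, f: M → M a diffeomorphism, and a: M → ℝ a function such that f*ω = a·ω. Then the function a is constant. -/
open Set

set_option maxHeartbeats 1000000

/-- **Libermann's theorem.** On a (connected) symplectic vector-space model of dimension
`2d` with `d ≥ 2`, if a diffeomorphism `f` satisfies `f*ω = a·ω` for a function `a`,
then `a` is constant. Here `ω` is a smooth field of alternating nondegenerate bilinear
forms which is closed (cyclic sum of the derivative vanishes). -/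
theorem libermann_conformal_factor_constant
    {E : Type*} [NormedAddCommGroup E] [NormedSpace ℝ E] [FiniteDimensional ℝ E]
    (d : ℕ) (hd : 2 ≤ d) (hdim : Module.finrank ℝ E = 2 * d)
    (ω : E → E →L[ℝ] E →L[ℝ] ℝ)
    (hω : ContDiff ℝ (⊤ : ℕ∞) ω)
    (halt : ∀ x u, ω x u u = 0)
    (hnondeg : ∀ x u, u ≠ 0 → ∃ v, ω x u v ≠ 0)
    (hclosed : ∀ x u v w,
      fderiv ℝ ω x u v w + fderiv ℝ ω x v w u + fderiv ℝ ω x w u v = 0)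
    (f g : E → E) (hf : ContDiff ℝ (⊤ : ℕ∞) f) (hg : ContDiff ℝ (⊤ : ℕ∞) g)
    (hgf : ∀ x, g (f x) = x) (hfg : ∀ x, f (g x) = x)
    (a : E → ℝ) (ha : ContDiff ℝ (⊤ : ℕ∞) a)
    (hpull : ∀ x u v, ω (f x) (fderiv ℝ f x u) (fderiv ℝ f x v) = a x * ω x u v) :
    ∀ x y, a x = a y := by
  -- antisymmetry of ω
  have hanti : ∀ x u v, ω x u v = - ω x v u := by
    intro x u v
    have h := halt x (u + v)
    simp only [map_add, ContinuousLinearMap.add_apply, halt] at h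
    linarith
  have hfd : Differentiable ℝ f := hf.differentiable (by simp)
  have hωd : Differentiable ℝ ω := hω.differentiable (by simp)
  have had : Differentiable ℝ a := ha.differentiable (by simp)
  have hAd : Differentiable ℝ (fderiv ℝ f) :=
    (hf.fderiv_right (m := ((⊤ : ℕ∞) : WithTop ℕ∞))
      (by exact_mod_cast (le_top : (⊤ : ℕ∞) + 1 ≤ ⊤))).differentiable (by simp)
  -- the key pointwise identity: da ∧ ω = 0
  have key : ∀ x u v w,
      fderiv ℝ a x u * ω x v w + fderiv ℝ a x v * ω x w u
        + fderiv ℝ a x w * ω x u v = 0 := by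
    intro x u v w
    -- derivative of y ↦ ω (f y) (Df y s) (Df y t) in direction r, computed
    have hL : ∀ r s t : E,
        fderiv ℝ (fun y => ω (f y) (fderiv ℝ f y s) (fderiv ℝ f y t)) x r
          = fderiv ℝ ω (f x) (fderiv ℝ f x r) (fderiv ℝ f x s) (fderiv ℝ f x t)
            + ω (f x) (fderiv ℝ (fderiv ℝ f) x r s) (fderiv ℝ f x t)
            + ω (f x) (fderiv ℝ f x s) (fderiv ℝ (fderiv ℝ f) x r t) := by
      intro r s t
      have h1 : HasFDerivAt f (fderiv ℝ f x) x := (hfd x).hasFDerivAt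
      have h2 : HasFDerivAt ω (fderiv ℝ ω (f x)) (f x) := (hωd (f x)).hasFDerivAt
      have hc : HasFDerivAt (fun y => ω (f y))
          ((fderiv ℝ ω (f x)).comp (fderiv ℝ f x)) x :=
          HasFDerivAt.comp (g := ω) (G := E →L[ℝ] E →L[ℝ] ℝ) (𝕜 := ℝ) x h2 h1
      have hA : HasFDerivAt (fderiv ℝ f) (fderiv ℝ (fderiv ℝ f) x) x :=
        (hAd x).hasFDerivAt
      have hAs := hA.clm_apply (hasFDerivAt_const s x)
      have hAt := hA.clm_apply (hasFDerivAt_const t x)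
      have hfull := (hc.clm_apply hAs).clm_apply hAt
      rw [hfull.fderiv]
      simp [ContinuousLinearMap.add_apply, ContinuousLinearMap.comp_apply,
        ContinuousLinearMap.flip_apply]
      ring
    -- derivative of y ↦ a y * ω y s t in direction r
    have hR : ∀ r s t : E,
        fderiv ℝ (fun y => a y * ω y s t) x r
          = fderiv ℝ a x r * ω x s t + a x * fderiv ℝ ω x r s t := by
      intro r s t
      have h2 : HasFDerivAt ω (fderiv ℝ ω x) x := (hωd x).hasFDerivAt
      have hωst := (h2.clm_apply (hasFDerivAt_const s x)).clm_apply
        (hasFDerivAt_const t x)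
      have hmul := ((had x).hasFDerivAt).mul' hωst
      rw [show (fun y => a y * ω y s t) = (a * fun y => ω y s t) from rfl, hmul.fderiv]
      simp [ContinuousLinearMap.add_apply, ContinuousLinearMap.comp_apply,
        ContinuousLinearMap.flip_apply, ContinuousLinearMap.smul_apply]
      ring
    have heq : ∀ s t : E, (fun y => ω (f y) (fderiv ℝ f y s) (fderiv ℝ f y t))
        = fun y => a y * ω y s t := fun s t => funext fun y => hpull y s t
    have I : ∀ r s t : E,
        fderiv ℝ ω (f x) (fderiv ℝ f x r) (fderiv ℝ f x s) (fderiv ℝ f x t)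
          + ω (f x) (fderiv ℝ (fderiv ℝ f) x r s) (fderiv ℝ f x t)
          + ω (f x) (fderiv ℝ f x s) (fderiv ℝ (fderiv ℝ f) x r t)
          = fderiv ℝ a x r * ω x s t + a x * fderiv ℝ ω x r s t := by
      intro r s t
      rw [← hL r s t, ← hR r s t, heq s t]
    -- symmetry of the second derivative of f
    have hS : ∀ r s : E, fderiv ℝ (fderiv ℝ f) x r s
        = fderiv ℝ (fderiv ℝ f) x s r := by
      intro r s
      exact second_derivative_symmetric (fun y => (hfd y).hasFDerivAt)
        ((hAd x).hasFDerivAt) r s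
    have h1 := I u v w
    have h2 := I v w u
    have h3 := I w u v
    have hcl := hclosed (f x) (fderiv ℝ f x u) (fderiv ℝ f x v) (fderiv ℝ f x w)
    have hcl2 := hclosed x u v w
    have e1 := hanti (f x) (fderiv ℝ (fderiv ℝ f) x u v) (fderiv ℝ f x w)
    have e2 := hanti (f x) (fderiv ℝ (fderiv ℝ f) x v w) (fderiv ℝ f x u)
    have e3 := hanti (f x) (fderiv ℝ (fderiv ℝ f) x u w) (fderiv ℝ f x v)
    have hcl2' : a x * fderiv ℝ ω x u v w + a x * fderiv ℝ ω x v w u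
        + a x * fderiv ℝ ω x w u v = 0 := by
      rw [← mul_add, ← mul_add, hcl2, mul_zero]
    rw [hS v u] at h2
    rw [hS w u, hS w v] at h3
    linarith [h1, h2, h3, hcl, hcl2', e1, e2, e3]
  -- da = 0 pointwise
  have hda : ∀ x, fderiv ℝ a x = 0 := by
    intro x
    by_contra hne
    obtain ⟨u, hu⟩ : ∃ u, fderiv ℝ a x u ≠ 0 := by
      by_contra h
      push_neg at h
      exact hne (ContinuousLinearMap.ext h)
    set ξ : E →L[ℝ] ℝ := fderiv ℝ a x with hξ
    -- any v in ker ξ with ω x u v = 0 must be 0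
    have claim1 : ∀ v : E, ξ v = 0 → ω x u v = 0 → v = 0 := by
      intro v hv hωuv
      by_contra hvne
      obtain ⟨w, hw⟩ := hnondeg x v hvne
      have := key x u v w
      rw [hv, hωuv] at this
      have : ξ u * ω x v w = 0 := by linarith
      exact hw (by
        rcases mul_eq_zero.1 this with h | h
        · exact absurd h hu
        · exact h)
    -- the map v ↦ ω x u v is injective on ker ξ
    let K := LinearMap.ker (ξ : E →ₗ[ℝ] ℝ)
    let φ : K →ₗ[ℝ] ℝ := ((ω x u).toLinearMap).comp K.subtype
    have hφinj : Function.Injective φ := by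
      rw [← LinearMap.ker_eq_bot]
      rw [LinearMap.ker_eq_bot']
      intro m hm
      have hv : ξ (m : E) = 0 := m.2
      have : (m : E) = 0 := claim1 m hv hm
      exact Subtype.ext this
    have hle : Module.finrank ℝ K ≤ 1 := by
      have := LinearMap.finrank_le_finrank_of_injective hφinj
      simpa using this
    have hsum := LinearMap.finrank_range_add_finrank_ker (ξ.toLinearMap)
    have hrange : Module.finrank ℝ (LinearMap.range ξ.toLinearMap) ≤ 1 := by
      have := Submodule.finrank_le (LinearMap.range ξ.toLinearMap)
      simpa using this
    have hkK : Module.finrank ℝ (LinearMap.ker ξ.toLinearMap) = Module.finrank ℝ K := rfl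
    rw [hdim] at hsum
    omega
  intro x y
  exact is_const_of_fderiv_eq_zero had hda x y
end

section
/- Let M be a Riemannian manifold with volume measure V and f: M → M a diffeomorphism such that the Jacobian A (defined by f*V = A·V) satisfies |A| ≤ a for some constant a ∈ (0,1). Then the set B(f) of points x ∈ M such that the backward orbit (f^{-n}(x))_{n∈ℕ} does not tend to infinity has V-measure zero. -/
/-!
A compact set `K` is shrunk by `f` geometrically: `μ (fⁿ '' K) ≤ aⁿ μ K`, which is summable. The
points whose backward orbit returns to `K` infinitely often are those lying in infinitely many
of the sets `fⁿ '' K`, so they form a null set by Borel–Cantelli. A backward orbit that does not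
tend to infinity returns infinitely often to one of countably many compact sets exhausting `M`.
-/

open MeasureTheory Set Filter
open scoped ENNReal

section Contraction

variable {α : Type*} [MeasurableSpace α] {μ : Measure α} {c : ℝ≥0∞}

theorem measure_image_le_of_forall_measurableSet {f : α → α}
    (hf : ∀ s, MeasurableSet s → μ (f '' s) ≤ c * μ s) (s : Set α) :
    μ (f '' s) ≤ c * μ s :=
  calc μ (f '' s) ≤ μ (f '' toMeasurable μ s) := measure_mono (image_mono (subset_toMeasurable μ s))
    _ ≤ c * μ (toMeasurable μ s) := hf _ (measurableSet_toMeasurable μ s)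
    _ = c * μ s := by rw [measure_toMeasurable]

theorem measure_iterate_image_le {f : α → α} (hf : ∀ s, μ (f '' s) ≤ c * μ s)
    (s : Set α) (n : ℕ) : μ (f^[n] '' s) ≤ c ^ n * μ s := by
  induction n with
  | zero => simp
  | succ n ih =>
    calc μ (f^[n + 1] '' s) = μ (f '' (f^[n] '' s)) := by
          rw [Function.iterate_succ', image_comp]
      _ ≤ c * μ (f^[n] '' s) := hf _
      _ ≤ c * (c ^ n * μ s) := by gcongr
      _ = c ^ (n + 1) * μ s := by ring

theorem measure_setOf_frequently_iterate_symm_mem_eq_zero (f : α ≃ α) (hc : c < 1)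
    (hf : ∀ s, μ (f '' s) ≤ c * μ s) {s : Set α} (hs : μ s ≠ ∞) :
    μ {x | ∃ᶠ n in atTop, f.symm^[n] x ∈ s} = 0 := by
  apply measure_setOfPred_frequently_eq_zero
  have hpre (n : ℕ) : {x | f.symm^[n] x ∈ s} = f^[n] '' s :=
    congrFun (image_eq_preimage_of_inverse (Function.LeftInverse.iterate f.symm_apply_apply n)
      (Function.RightInverse.iterate f.apply_symm_apply n)).symm s
  have hsum : ∑' n : ℕ, μ (f^[n] '' s) ≤ ∑' n : ℕ, c ^ n * μ s :=
    ENNReal.tsum_le_tsum (measure_iterate_image_le hf s)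
  simp only [hpre]
  refine ne_top_of_le_ne_top ?_ hsum
  rw [ENNReal.tsum_mul_right, ENNReal.tsum_geometric]
  exact ENNReal.mul_ne_top (ENNReal.inv_ne_top.2 (tsub_pos_of_lt hc).ne') hs

end Contraction

theorem CompactExhaustion.exists_frequently_mem {X ι : Type*} [TopologicalSpace X]
    (K : CompactExhaustion X) {l : Filter ι} {u : ι → X}
    (hu : ¬ ∀ L : Set X, IsCompact L → ∀ᶠ i in l, u i ∉ L) :
    ∃ k, ∃ᶠ i in l, u i ∈ K k := by
  push Not at hu
  obtain ⟨L, hL, hfreq⟩ := hu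
  obtain ⟨k, hLk⟩ := K.exists_superset_of_isCompact hL
  exact ⟨k, hfreq.mono fun _ hi => hLk hi⟩

theorem backward_nonescaping_set_null_general
    {M : Type*} [TopologicalSpace M] [MeasurableSpace M]
    [LocallyCompactSpace M] [SigmaCompactSpace M]
    (μ : Measure M) [IsFiniteMeasureOnCompacts μ]
    (f : M ≃ₜ M)
    (a : ℝ) (ha : a ∈ Set.Ioo (0:ℝ) 1)
    (hcontr : ∀ s : Set M, MeasurableSet s → μ (f '' s) ≤ ENNReal.ofReal a * μ s) :
    μ {x : M | ¬ ∀ K : Set M, IsCompact K →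
        ∀ᶠ n : ℕ in atTop, (f.symm : M → M)^[n] x ∉ K} = 0 := by
  let K := CompactExhaustion.choice M
  have hnull (k : ℕ) : μ {x | ∃ᶠ n in atTop, f.toEquiv.symm^[n] x ∈ K k} = 0 :=
    measure_setOf_frequently_iterate_symm_mem_eq_zero f.toEquiv (ENNReal.ofReal_lt_one.2 ha.2)
      (measure_image_le_of_forall_measurableSet hcontr) (K.isCompact k).measure_ne_top
  refine measure_mono_null (fun x hx => ?_) (measure_iUnion_null hnull)
  exact mem_iUnion.2 (K.exists_frequently_mem hx)

/-- Let `M` be a Riemannian manifold (abstractly: a locally compact, σ-compact space with a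
Borel measure `μ` finite on compacts) and `f` a diffeomorphism whose Jacobian is bounded by
`a ∈ (0,1)` (abstractly: `μ(f(s)) ≤ a·μ(s)`). Then the set `B(f)` of points whose backward
orbit does not tend to infinity has measure zero. -/
theorem backward_nonescaping_set_null
    {M : Type*} [TopologicalSpace M] [MeasurableSpace M] [BorelSpace M]
    [T2Space M] [LocallyCompactSpace M] [SigmaCompactSpace M]
    (μ : Measure M) [IsFiniteMeasureOnCompacts μ]
    (f : M ≃ₜ M)
    (a : ℝ) (ha : a ∈ Set.Ioo (0:ℝ) 1)
    (hcontr : ∀ s : Set M, MeasurableSet s → μ (f '' s) ≤ ENNReal.ofReal a * μ s) :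
    μ {x : M | ¬ ∀ K : Set M, IsCompact K →
        ∀ᶠ n : ℕ in atTop, (f.symm : M → M)^[n] x ∉ K} = 0 :=
  backward_nonescaping_set_null_general μ f a ha hcontr
end

section
/- Let M be a Riemannian manifold with volume V and f: M → M a diffeomorphism such that for every measurable set A with 0 < V(A) < ∞ one has V(f(A)) < V(A). Then the set of points whose backward orbit under f does not tend to infinity has V-measure zero. -/
/-!
Write `g = f⁻¹` and fix a compact `K`. Let `B` be the set of points whose `g`-orbit visits `K`
infinitely often; `B` is `g`-invariant and `C = B ∩ K` has finite measure. Split `C` into the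
pieces `Dₘ` of points whose `g`-orbit first returns to `C` at time `m + 1`, and let
`Eₘ = g^[m + 1] '' Dₘ ⊆ C`. The `Eₘ` are again disjoint, so
`μ C = ∑ μ Dₘ` and `∑ μ Eₘ ≤ μ C`, while contraction gives `μ Dₘ < μ Eₘ` unless `μ Dₘ = 0`.
Hence `μ C = 0`, and `B`, which is covered by the images `f^[n] '' C`, is null as well.
Exhausting `M` by countably many compacts finishes the proof.
-/

open MeasureTheory Set Filter Function

theorem MeasurableEmbedding.iterate {α : Type*} [MeasurableSpace α] {f : α → α}
    (hf : MeasurableEmbedding f) (n : ℕ) : MeasurableEmbedding f^[n] := by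
  induction n with
  | zero => exact .id
  | succ n ih => rw [iterate_succ']; exact hf.comp ih

def StrictlyContractsMeasure {α : Type*} [MeasurableSpace α] (μ : Measure α) (f : α → α) :
    Prop :=
  ∀ A : Set α, MeasurableSet A → 0 < μ A → μ A < ⊤ → μ (f '' A) < μ A

namespace StrictlyContractsMeasure

variable {α : Type*} [MeasurableSpace α] {μ : Measure α} {f : α → α}

theorem measure_image_le (hcontr : StrictlyContractsMeasure μ f) {A : Set α}
    (hA : MeasurableSet A) (hfA : MeasurableSet (f '' A)) (hfin : μ (f '' A) ≠ ⊤) :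
    μ (f '' A) ≤ μ A := by
  rcases eq_zero_or_pos (μ A) with hA0 | hApos
  · -- a null `A` with `μ (f '' A) > 0` would make `A ∪ f '' A` grow under `f`
    by_contra! hlt
    have hpos : 0 < μ (f '' A) := hA0 ▸ hlt
    have hunion : μ (A ∪ f '' A) = μ (f '' A) :=
      le_antisymm ((measure_union_le _ _).trans_eq (by rw [hA0, zero_add]))
        (measure_mono subset_union_right)
    have := hcontr _ (hA.union hfA) (hunion ▸ hpos) (hunion ▸ hfin.lt_top)
    exact (this.trans_eq hunion).not_ge (measure_mono (image_mono subset_union_left))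
  · rcases eq_or_ne (μ A) ⊤ with htop | htop
    · exact htop ▸ le_top
    · exact (hcontr A hA hApos htop.lt_top).le

theorem antitone_measure_image_iterate (hcontr : StrictlyContractsMeasure μ f)
    (hf : MeasurableEmbedding f) {A : Set α} (hA : MeasurableSet A)
    (hfin : ∀ n, μ (f^[n] '' A) ≠ ⊤) : Antitone fun n ↦ μ (f^[n] '' A) := by
  refine antitone_nat_of_succ_le fun n ↦ ?_
  have hsucc := hfin (n + 1)
  rw [iterate_succ', image_comp] at hsucc ⊢
  have hmeas := (hf.iterate n).measurableSet_image' hA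
  exact hcontr.measure_image_le hmeas (hf.measurableSet_image' hmeas) hsucc

theorem measure_image_iterate_succ_lt (hcontr : StrictlyContractsMeasure μ f)
    (hf : MeasurableEmbedding f) {A : Set α} (hA : MeasurableSet A)
    (hfin : ∀ n, μ (f^[n] '' A) ≠ ⊤) {n : ℕ} (hne : μ (f^[n + 1] '' A) ≠ 0) :
    μ (f^[n + 1] '' A) < μ A := by
  have hanti := hcontr.antitone_measure_image_iterate hf hA hfin
  calc μ (f^[n + 1] '' A) = μ (f '' (f^[n] '' A)) := by rw [iterate_succ', image_comp]
    _ < μ (f^[n] '' A) :=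
      hcontr _ ((hf.iterate n).measurableSet_image' hA)
        ((pos_iff_ne_zero.2 hne).trans_le (hanti n.le_succ)) (hfin n).lt_top
    _ ≤ μ A := by simpa using hanti n.zero_le

theorem measure_eq_zero_of_subset_iUnion_image_iterate (hcontr : StrictlyContractsMeasure μ f)
    (hf : MeasurableEmbedding f) {C : Set α} (hC : MeasurableSet C)
    (hfin : ∀ n, μ (f^[n] '' C) ≠ ⊤) (hret : C ⊆ ⋃ n, f^[n + 1] '' C) : μ C = 0 := by
  set D := disjointed fun n ↦ C ∩ f^[n + 1] '' C
  set E := fun n ↦ C ∩ f^[n + 1] ⁻¹' D n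
  have hDC : ∀ n, D n ⊆ C ∩ f^[n + 1] '' C := disjointed_subset _
  have hDmeas : ∀ n, MeasurableSet (D n) :=
    .disjointed fun n ↦ hC.inter ((hf.iterate _).measurableSet_image' hC)
  have hEmeas : ∀ n, MeasurableSet (E n) := fun n ↦ hC.inter ((hf.iterate _).measurable (hDmeas n))
  have hUD : ⋃ n, D n = C := by rw [iUnion_disjointed, ← inter_iUnion, inter_eq_left.2 hret]
  have himage : ∀ n, f^[n + 1] '' E n = D n := fun n ↦ by
    rw [image_inter_preimage, inter_eq_right]
    exact (hDC n).trans inter_subset_right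
  have hEdisj : Pairwise (Disjoint on E) := by
    refine (pairwise_disjoint_on E).2 fun a b hab ↦ disjoint_left.2 fun y hya hyb ↦ ?_
    -- `f^[b + 1] y` is `f^[b - a]` of the point `f^[a + 1] y ∈ C`, so it is not a first hit
    have hy : f^[b + 1] y ∈ C ∩ f^[(b - a - 1) + 1] '' C :=
      ⟨(hDC b hyb.2).1, f^[a + 1] y, (hDC a hya.2).1, by
        rw [← iterate_add_apply]; congr 1; omega⟩
    have hyb' : f^[b + 1] y ∈ disjointed (fun n ↦ C ∩ f^[n + 1] '' C) b := hyb.2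
    rw [disjointed_eq_inter_compl] at hyb'
    exact mem_iInter₂.1 hyb'.2 (b - a - 1) (by omega) hy
  have hsubC : ∀ n k, μ (f^[k] '' E n) ≠ ⊤ := fun n k ↦
    ne_top_of_le_ne_top (hfin k) (measure_mono (image_mono inter_subset_left))
  have hDE : ∀ n, μ (D n) ≤ μ (E n) := fun n ↦ by
    rw [← himage n]
    simpa using hcontr.antitone_measure_image_iterate hf (hEmeas n) (hsubC n) (n + 1).zero_le
  have hsumD : ∑' n, μ (D n) = μ C := by rw [← measure_iUnion (disjoint_disjointed _) hDmeas, hUD]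
  have hD0 : ∀ n, μ (D n) = 0 := by
    by_contra! ⟨n, hn⟩
    have hlt : μ (D n) < μ (E n) :=
      himage n ▸ hcontr.measure_image_iterate_succ_lt hf (hEmeas n) (hsubC n) (himage n ▸ hn)
    have : μ C < μ C := calc
      μ C = ∑' n, μ (D n) := hsumD.symm
      _ < ∑' n, μ (E n) := ENNReal.tsum_lt_tsum (hsumD ▸ by simpa using hfin 0) hDE hlt
      _ = μ (⋃ n, E n) := (measure_iUnion hEdisj hEmeas).symm
      _ ≤ μ C := measure_mono (iUnion_subset fun n ↦ inter_subset_left)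
    exact this.false
  rw [← hUD]
  exact measure_iUnion_null hD0

end StrictlyContractsMeasure

theorem measure_setOf_frequently_iterate_symm_mem_eq_zero_s4 {M : Type*} [TopologicalSpace M]
    [MeasurableSpace M] [BorelSpace M] [T2Space M] {μ : Measure M} [IsFiniteMeasureOnCompacts μ]
    {f : M ≃ₜ M} (hcontr : StrictlyContractsMeasure μ f) {K : Set M} (hK : IsCompact K) :
    μ {x | ∃ᶠ n in atTop, (f.symm : M → M)^[n] x ∈ K} = 0 := by
  set B := {x | ∃ᶠ n in atTop, (f.symm : M → M)^[n] x ∈ K}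
  have hBmeas : MeasurableSet B := by
    convert MeasurableSet.measurableSet_limsup fun n ↦
      (f.symm.continuous.measurable.iterate n) hK.measurableSet
    ext x
    rw [mem_limsup_iff_frequently_mem]
    rfl
  have hB : ∀ x ∈ B, ∀ N, ∃ n ≥ N, x ∈ f^[n] '' (B ∩ K) := by
    intro x hx N
    obtain ⟨n, hnN, hnK⟩ := frequently_atTop.1 hx N
    refine ⟨n, hnN, _, ⟨?_, hnK⟩, (show LeftInverse f f.symm from f.apply_symm_apply).iterate n x⟩
    rw [mem_ofPred_eq, ← map_add_atTop_eq_nat n, frequently_map] at hx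
    simpa only [B, mem_ofPred_eq, ← iterate_add_apply] using hx
  have hfin : ∀ n, μ (f^[n] '' (B ∩ K)) ≠ ⊤ := fun n ↦
    ne_top_of_le_ne_top (hK.image (f.continuous.iterate n)).measure_lt_top.ne
      (measure_mono (image_mono inter_subset_right))
  have hCmeas := hBmeas.inter hK.measurableSet
  have hC0 : μ (B ∩ K) = 0 := by
    refine hcontr.measure_eq_zero_of_subset_iUnion_image_iterate f.measurableEmbedding hCmeas
      hfin fun x hx ↦ ?_
    obtain ⟨n, hn, hx⟩ := hB x hx.1 1
    obtain ⟨m, rfl⟩ := Nat.exists_eq_add_of_le' hn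
    exact mem_iUnion.2 ⟨m, hx⟩
  have hanti := hcontr.antitone_measure_image_iterate f.measurableEmbedding hCmeas hfin
  refine measure_mono_null (fun x hx ↦ ?_) (measure_iUnion_null fun n : ℕ ↦
    le_antisymm ((hanti n.zero_le).trans_eq (by simpa using hC0)) zero_le)
  obtain ⟨n, -, hn⟩ := hB x hx 0
  exact mem_iUnion.2 ⟨n, hn⟩

/-- Let `M` be a Riemannian manifold (abstractly: a locally compact, σ-compact space with a
Borel measure `μ` finite on compacts) and `f` a diffeomorphism which strictly contracts the
volume of every measurable set of finite positive volume. Then the set of points whose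
backward orbit does not tend to infinity has measure zero. -/
theorem backward_nonescaping_set_null_of_strict_contraction
    {M : Type*} [TopologicalSpace M] [MeasurableSpace M] [BorelSpace M]
    [T2Space M] [LocallyCompactSpace M] [SigmaCompactSpace M]
    (μ : Measure M) [IsFiniteMeasureOnCompacts μ]
    (f : M ≃ₜ M)
    (hcontr : ∀ A : Set M, MeasurableSet A → 0 < μ A → μ A < ⊤ → μ (f '' A) < μ A) :
    μ {x : M | ¬ ∀ K : Set M, IsCompact K →
        ∀ᶠ n : ℕ in atTop, (f.symm : M → M)^[n] x ∉ K} = 0 := by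
  set K := CompactExhaustion.choice M
  refine measure_mono_null (fun x hx ↦ ?_) (measure_iUnion_null fun i ↦
    measure_setOf_frequently_iterate_symm_mem_eq_zero_s4 hcontr (K.isCompact i))
  simp only [mem_ofPred_eq, not_forall, not_eventually, not_not] at hx
  obtain ⟨L, hL, hfreq⟩ := hx
  obtain ⟨i, hLi⟩ := K.exists_superset_of_isCompact hL
  exact mem_iUnion.2 ⟨i, hfreq.mono fun n hn ↦ hLi hn⟩
end

section
/- Let M be a Riemannian manifold with volume V and f: M → M a diffeomorphism with |det Df| ≤ a < 1 everywhere. Then the set of negatively recurrent points of f has V-measure zero. -/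
/-! Write `g = f⁻¹`. For an open set `U` of finite measure, `μ (g⁻ⁿ U) = μ (fⁿ U) ≤ aⁿ μ U` is
summable, so by Borel–Cantelli almost no point of `M` visits `U` infinitely often under `g`. A
negatively recurrent point `x` visits every neighbourhood of itself infinitely often under `g`,
and countably many open sets of finite measure cover `M`. -/

open MeasureTheory Set Filter Topology
open scoped ENNReal

section Contracting

variable {α : Type*} [MeasurableSpace α] {μ : Measure α} {g : α → α} {c : ℝ≥0∞}

theorem measure_preimage_iterate_le (hg : Measurable g)
    (hcontr : ∀ s, MeasurableSet s → μ (g ⁻¹' s) ≤ c * μ s) {s : Set α} (hs : MeasurableSet s)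
    (n : ℕ) : μ (g^[n] ⁻¹' s) ≤ c ^ n * μ s := by
  induction n with
  | zero => simp
  | succ n ih =>
    calc μ (g^[n + 1] ⁻¹' s) = μ (g ⁻¹' (g^[n] ⁻¹' s)) := by
          rw [Function.iterate_succ, preimage_comp]
      _ ≤ c * μ (g^[n] ⁻¹' s) := hcontr _ (hg.iterate n hs)
      _ ≤ c * (c ^ n * μ s) := by gcongr
      _ = c ^ (n + 1) * μ s := by ring

theorem measure_limsup_preimage_iterate_eq_zero (hg : Measurable g)
    (hcontr : ∀ s, MeasurableSet s → μ (g ⁻¹' s) ≤ c * μ s) (hc : c < 1) {s : Set α}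
    (hs : MeasurableSet s) (hμs : μ s ≠ ∞) :
    μ (limsup (fun n => g^[n] ⁻¹' s) atTop) = 0 := by
  refine measure_limsup_atTop_eq_zero (ne_top_of_le_ne_top ?_
    (ENNReal.tsum_le_tsum (measure_preimage_iterate_le hg hcontr hs)))
  rw [ENNReal.tsum_mul_right, ENNReal.tsum_geometric]
  exact ENNReal.mul_ne_top (ENNReal.inv_ne_top.2 (tsub_pos_of_lt hc).ne') hμs

end Contracting

theorem mem_limsup_preimage_iterate_of_tendsto {X : Type*} [TopologicalSpace X] {g : X → X}
    {x : X} {U : Set X} (hU : U ∈ 𝓝 x) {n : ℕ → ℕ} (hn : StrictMono n)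
    (hx : Tendsto (fun k => g^[n k] x) atTop (𝓝 x)) :
    x ∈ limsup (fun m => g^[m] ⁻¹' U) atTop :=
  mem_limsup_iff_frequently_mem.2 <| hn.tendsto_atTop.frequently (hx.eventually hU).frequently

theorem negatively_recurrent_set_null_general
    {M : Type*} [TopologicalSpace M] [MeasurableSpace M] [BorelSpace M]
    [LocallyCompactSpace M] [SigmaCompactSpace M]
    (μ : Measure M) [IsFiniteMeasureOnCompacts μ]
    (f : M ≃ₜ M)
    (a : ℝ) (ha : a ∈ Set.Ioo (0:ℝ) 1)
    (hcontr : ∀ s : Set M, MeasurableSet s → μ (f '' s) ≤ ENNReal.ofReal a * μ s) :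
    μ {x : M | ∃ n : ℕ → ℕ, StrictMono n ∧
        Tendsto (fun k => (f.symm : M → M)^[n k] x) atTop (nhds x)} = 0 := by
  let U := μ.finiteSpanningSetsInOpen
  have hcontr_symm : ∀ s, MeasurableSet s → μ (f.symm ⁻¹' s) ≤ ENNReal.ofReal a * μ s :=
    fun s hs => f.image_eq_preimage_symm s ▸ hcontr s hs
  have hnull : ∀ i, μ (limsup (fun m => (f.symm : M → M)^[m] ⁻¹' U.set i) atTop) = 0 := fun i =>
    measure_limsup_preimage_iterate_eq_zero f.symm.continuous.measurable hcontr_symm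
      (ENNReal.ofReal_lt_one.2 ha.2) (U.set_mem i).measurableSet (U.finite i).ne
  refine measure_mono_null ?_ (measure_iUnion_null hnull)
  rintro x ⟨n, hn, hx⟩
  obtain ⟨i, hi⟩ := mem_iUnion.1 (U.spanning.symm ▸ mem_univ x)
  exact mem_iUnion.2 ⟨i, mem_limsup_preimage_iterate_of_tendsto ((U.set_mem i).mem_nhds hi) hn hx⟩

/-- Let `M` be a Riemannian manifold (abstractly: a locally compact, σ-compact space with a
Borel measure `μ` finite on compacts) and `f` a diffeomorphism with Jacobian bounded by
`a ∈ (0,1)` (abstractly: `μ(f(s)) ≤ a·μ(s)`). Then the set of negatively recurrent points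
of `f` has measure zero. -/
theorem negatively_recurrent_set_null
    {M : Type*} [TopologicalSpace M] [MeasurableSpace M] [BorelSpace M]
    [T2Space M] [LocallyCompactSpace M] [SigmaCompactSpace M]
    (μ : Measure M) [IsFiniteMeasureOnCompacts μ]
    (f : M ≃ₜ M)
    (a : ℝ) (ha : a ∈ Set.Ioo (0:ℝ) 1)
    (hcontr : ∀ s : Set M, MeasurableSet s → μ (f '' s) ≤ ENNReal.ofReal a * μ s) :
    μ {x : M | ∃ n : ℕ → ℕ, StrictMono n ∧
        Tendsto (fun k => (f.symm : M → M)^[n k] x) atTop (nhds x)} = 0 :=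
  negatively_recurrent_set_null_general μ f a ha hcontr
end

section
/- Let f: M → M satisfy f*ω = aω with a ∈ (0,1), and let j: 𝕋^m → M be a C¹ embedding with f(j(𝕋^m)) = j(𝕋^m) such that j⁻¹ ∘ f ∘ j is the rotation R_β(θ) = θ + β on 𝕋^m. Then the pullback j*ω is zero, i.e. the torus j(𝕋^m) is isotropic. -/
/-!
For fixed tangent vectors `u, v`, the coefficient `g(θ) = (j*Ω)_θ(u, v)` is continuous and
`ℤᵐ`-periodic, hence bounded, and the conjugacy `f ∘ j = j ∘ R_β` together with `f*Ω = aΩ`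
gives `g(θ + β) = a g(θ)`. Iterating backwards, `|g(θ)| = aⁿ |g(θ - nβ)| ≤ aⁿ C → 0`.
-/

open Set Filter Topology

theorem eq_zero_of_add_eq_mul_of_bounded {G : Type*} [AddGroup G] {g : G → ℝ} {a : ℝ}
    (β : G) (ha : |a| < 1) (hg : ∀ x, g (x + β) = a * g x) {C : ℝ}
    (hC : ∀ x, |g x| ≤ C) (x : G) : g x = 0 := by
  have hiter : ∀ n : ℕ, g x = a ^ n * g (x - n • β) := by
    intro n
    induction n with
    | zero => simp
    | succ n ih =>
      rw [ih, succ_nsmul', sub_add_eq_sub_sub_swap, pow_succ, mul_assoc, ← hg, sub_add_cancel]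
  have hle : ∀ n : ℕ, |g x| ≤ |a| ^ n * C := fun n => by
    rw [hiter n, abs_mul, abs_pow]
    exact mul_le_mul_of_nonneg_left (hC _) (pow_nonneg (abs_nonneg a) n)
  have hlim : Tendsto (fun n : ℕ => |a| ^ n * C) atTop (𝓝 0) := by
    simpa using (tendsto_pow_atTop_nhds_zero_of_lt_one (abs_nonneg a) ha).mul_const C
  exact abs_nonpos_iff.mp (ge_of_tendsto' hlim hle)

theorem exists_bound_of_continuous_of_intPeriodic {ι : Type*} {g : (ι → ℝ) → ℝ}
    (hg : Continuous g) (hper : ∀ (θ : ι → ℝ) (z : ι → ℤ), g (θ + fun i => (z i : ℝ)) = g θ) :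
    ∃ C, ∀ θ, |g θ| ≤ C := by
  obtain ⟨C, hC⟩ := (isCompact_Icc (a := (0 : ι → ℝ)) (b := 1)).exists_bound_of_continuousOn
    hg.continuousOn
  refine ⟨C, fun θ => ?_⟩
  have hfract : (fun i => Int.fract (θ i)) ∈ Icc (0 : ι → ℝ) 1 :=
    ⟨fun i => Int.fract_nonneg _, fun i => (Int.fract_lt_one _).le⟩
  have hθ : ((fun i => Int.fract (θ i)) + fun i => ((⌊θ i⌋ : ℤ) : ℝ)) = θ :=
    funext fun i => Int.fract_add_floor (θ i)
  rw [← hθ, hper]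
  exact hC _ hfract

section Pullback

variable {V E : Type*} [NormedAddCommGroup V] [NormedSpace ℝ V]
  [NormedAddCommGroup E] [NormedSpace ℝ E]

/-- The coefficient `(j*Ω)_θ(u, v)` of the pulled-back form. -/
noncomputable def pullbackForm (Ω : E → E →L[ℝ] E →L[ℝ] ℝ) (j : V → E) (θ u v : V) : ℝ :=
  Ω (j θ) (fderiv ℝ j θ u) (fderiv ℝ j θ v)

theorem continuous_pullbackForm {Ω : E → E →L[ℝ] E →L[ℝ] ℝ} {j : V → E} (hΩ : Continuous Ω)
    (hj : ContDiff ℝ 1 j) (u v : V) : Continuous fun θ => pullbackForm Ω j θ u v := by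
  have hDj : Continuous (fderiv ℝ j) := hj.continuous_fderiv one_ne_zero
  exact ((hΩ.comp hj.continuous).clm_apply (hDj.clm_apply continuous_const)).clm_apply
    (hDj.clm_apply continuous_const)

theorem pullbackForm_add_of_forall_add_eq (Ω : E → E →L[ℝ] E →L[ℝ] ℝ) {j : V → E} {c : V}
    (hj : ∀ θ, j (θ + c) = j θ) (θ u v : V) :
    pullbackForm Ω j (θ + c) u v = pullbackForm Ω j θ u v := by
  have hDj : fderiv ℝ j (θ + c) = fderiv ℝ j θ := by
    rw [← fderiv_comp_add_right, funext hj]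
  simp only [pullbackForm, hj, hDj]

theorem pullbackForm_add_of_conj {Ω : E → E →L[ℝ] E →L[ℝ] ℝ} {f : E → E} {j : V → E} {a : ℝ}
    {β θ : V} (hf : DifferentiableAt ℝ f (j θ)) (hj : DifferentiableAt ℝ j θ)
    (hpull : ∀ u v, Ω (f (j θ)) (fderiv ℝ f (j θ) u) (fderiv ℝ f (j θ) v) = a * Ω (j θ) u v)
    (hconj : ∀ θ, f (j θ) = j (θ + β)) (u v : V) :
    pullbackForm Ω j (θ + β) u v = a * pullbackForm Ω j θ u v := by
  have hDj : fderiv ℝ j (θ + β) = (fderiv ℝ f (j θ)).comp (fderiv ℝ j θ) := by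
    rw [← fderiv_comp_add_right, ← funext hconj, ← Function.comp_def, fderiv_comp θ hf hj]
  simp only [pullbackForm, ← hconj θ, hDj, ContinuousLinearMap.comp_apply, hpull]

end Pullback

/-- (Calleja–Celletti–de la Llave) Let `f` be conformally symplectic (`f*Ω = aΩ`,
`a ∈ (0,1)`) and `j` a `C¹` embedded invariant torus (a ℤᵐ-periodic parametrization)
on which `f` is conjugate to the rotation by `β`: `f ∘ j = j ∘ (· + β)`. Then the torus
is isotropic: the pullback `j*Ω` vanishes. -/
theorem invariant_rotational_torus_isotropic
    {E : Type*} [NormedAddCommGroup E] [NormedSpace ℝ E]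
    (m : ℕ)
    (Ω : E → E →L[ℝ] E →L[ℝ] ℝ) (hΩc : Continuous Ω)
    (f : E → E) (hf : Differentiable ℝ f)
    (a : ℝ) (ha : a ∈ Set.Ioo (0:ℝ) 1)
    (hpull : ∀ z u v, Ω (f z) (fderiv ℝ f z u) (fderiv ℝ f z v) = a * Ω z u v)
    (j : (Fin m → ℝ) → E) (hj : ContDiff ℝ 1 j)
    (hper : ∀ (θ : Fin m → ℝ) (z : Fin m → ℤ), j (θ + fun i => (z i : ℝ)) = j θ)
    (β : Fin m → ℝ)
    (hconj : ∀ θ, f (j θ) = j (θ + β)) :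
    ∀ θ u v, Ω (j θ) (fderiv ℝ j θ u) (fderiv ℝ j θ v) = 0 := by
  intro θ u v
  have habs : |a| < 1 := abs_lt.2 ⟨by linarith [ha.1], ha.2⟩
  obtain ⟨C, hC⟩ := exists_bound_of_continuous_of_intPeriodic (continuous_pullbackForm hΩc hj u v)
    fun θ z => pullbackForm_add_of_forall_add_eq Ω (fun ψ => hper ψ z) θ u v
  exact eq_zero_of_add_eq_mul_of_bounded β habs
    (fun θ => pullbackForm_add_of_conj (hf (j θ)) (hj.differentiable one_ne_zero θ)
      (hpull (j θ)) hconj u v) hC θ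
end

section
/- Let (M, ω = -dλ) be exact symplectic, X a conformally Hamiltonian vector field (i_Xω = αλ + dH, α ≠ 0) with complete flow (φ_t), and L ⊂ M a closed (compact) submanifold invariant under the flow with dim L = ½ dim M and ω|_{TL} = 0. Then λ restricted to L is exact; i.e. L is exact Lagrangian. -/
open Set intervalIntegral

/-- (Arnaud–Féjoz) Let `(M, ω = -dL)` be exact symplectic (vector-space model), `X` a
conformally Hamiltonian vector field (`i_X ω = α L + dH`, `α ≠ 0`) with complete flow `φ`,
and `Lag` a compact flow-invariant Lagrangian submanifold (isotropic: `ω = dL` vanishes on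
pairs of vectors tangent to `Lag`, tangency being realized by curves inside `Lag`).
Then `Lag` is exact Lagrangian: the integral of the Liouville form `L` along every
`C¹` loop contained in `Lag` vanishes. -/
theorem invariant_lagrangian_is_exact
    {E : Type*} [NormedAddCommGroup E] [NormedSpace ℝ E]
    (L : E → E →L[ℝ] ℝ) (hL : ContDiff ℝ (⊤ : ℕ∞) L)
    (H : E → ℝ) (hH : ContDiff ℝ (⊤ : ℕ∞) H)
    (α : ℝ) (hα : α ≠ 0)
    (X : E → E) (hX : ContDiff ℝ (⊤ : ℕ∞) X)
    (hrel : ∀ x v, fderiv ℝ L x v (X x) - fderiv ℝ L x (X x) v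
        = α * L x v + fderiv ℝ H x v)
    (φ : ℝ → E → E)
    (hφ : ContDiff ℝ (⊤ : ℕ∞) fun p : ℝ × E => φ p.1 p.2)
    (hφ0 : ∀ x, φ 0 x = x)
    (hode : ∀ t x, HasDerivAt (fun s => φ s x) (X (φ t x)) t)
    (Lag : Set E) (hLagcpt : IsCompact Lag)
    (hLaginv : ∀ t, φ t '' Lag = Lag)
    (hiso : ∀ p u v, p ∈ Lag →
        (∃ c : ℝ → E, (∀ s, c s ∈ Lag) ∧ c 0 = p ∧ HasDerivAt c u 0) →
        (∃ c : ℝ → E, (∀ s, c s ∈ Lag) ∧ c 0 = p ∧ HasDerivAt c v 0) →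
        fderiv ℝ L p u v - fderiv ℝ L p v u = 0) :
    ∀ γ : ℝ → E, ContDiff ℝ 1 γ → (∀ s, γ s ∈ Lag) → (∀ s, γ (s + 1) = γ s) →
      (∫ s in (0:ℝ)..1, L (γ s) (deriv γ s)) = 0 := by
  intro γ hγ hγLag hper
  have hγd : Differentiable ℝ γ := hγ.differentiable one_ne_zero
  have key : ∀ s, L (γ s) (deriv γ s) = (-(1/α)) * (fderiv ℝ H (γ s)) (deriv γ s) := by
    intro s
    have hu : ∃ c : ℝ → E, (∀ t, c t ∈ Lag) ∧ c 0 = γ s ∧ HasDerivAt c (X (γ s)) 0 := by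
      refine ⟨fun t => φ t (γ s), ?_, hφ0 (γ s), ?_⟩
      · intro t; rw [← hLaginv t]; exact ⟨γ s, hγLag s, rfl⟩
      · have := hode 0 (γ s); rwa [hφ0 (γ s)] at this
    have hv : ∃ c : ℝ → E, (∀ σ, c σ ∈ Lag) ∧ c 0 = γ s ∧ HasDerivAt c (deriv γ s) 0 := by
      refine ⟨fun σ => γ (s + σ), fun σ => hγLag _, by simp, ?_⟩
      have h1 : HasDerivAt (fun σ : ℝ => s + σ) 1 0 := by
        simpa using (hasDerivAt_id (0 : ℝ)).const_add s
      have h2 : HasDerivAt γ (deriv γ s) (s + 0) := by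
        simpa using (hγd s).hasDerivAt
      simpa [Function.comp_def] using h2.scomp 0 h1
    have hiso' := hiso (γ s) (X (γ s)) (deriv γ s) (hγLag s) hu hv
    have hrel' := hrel (γ s) (deriv γ s)
    have h0 : α * L (γ s) (deriv γ s) + fderiv ℝ H (γ s) (deriv γ s) = 0 := by
      linarith [hiso', hrel']
    field_simp
    linarith [h0]
  have hHd : ∀ s : ℝ, HasDerivAt (fun t => H (γ t)) ((fderiv ℝ H (γ s)) (deriv γ s)) s := by
    intro s
    exact ((hH.differentiable (by simp) (γ s)).hasFDerivAt).comp_hasDerivAt s (hγd s).hasDerivAt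
  have hcont : Continuous fun s => (fderiv ℝ H (γ s)) (deriv γ s) := by
    have h1 : Continuous fun s => fderiv ℝ H (γ s) :=
      (hH.continuous_fderiv (by simp)).comp hγ.continuous
    exact h1.clm_apply (hγ.continuous_deriv le_rfl)
  have hint : (∫ s in (0:ℝ)..1, (fderiv ℝ H (γ s)) (deriv γ s)) = H (γ 1) - H (γ 0) :=
    intervalIntegral.integral_eq_sub_of_hasDerivAt (fun s _ => hHd s)
      (hcont.intervalIntegrable 0 1)
  have hγ10 : γ 1 = γ 0 := by simpa using hper 0
  calc (∫ s in (0:ℝ)..1, L (γ s) (deriv γ s))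
      = ∫ s in (0:ℝ)..1, (-(1/α)) * (fderiv ℝ H (γ s)) (deriv γ s) := by
        simp only [key]
    _ = (-(1/α)) * (H (γ 1) - H (γ 0)) := by
        rw [intervalIntegral.integral_const_mul, hint]
    _ = 0 := by rw [hγ10]; ring
end
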